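/- arXiv:2402.02560 — 4 statements merged into one kernel-verified Lean document; each statement's English description precedes it below -/
import Mathlib

section
/- Let F ∈ L_t and G ∈ L_s be polynomial vector fields on ℝⁿ whose components are homogeneous of degrees t+1 and s+1 respectively, and set ℓ = (1+t)/(1+s). Then for all x ∈ ℝⁿ, ad(F)(G)(x) = (1/(1+t)) · ( (dG/dx)(x)(dF/dx)(x) − ℓ · (dF/dx)(x)(dG/dx)(x) ) · x. -/
/-!
Euler's identity for homogeneous polynomials gives `(dF/dx)(x) x = (1+t) F(x)` and
`(dG/dx)(x) x = (1+s) G(x)`. Hence the right-hand side equals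
`(dG/dx)(x) F(x) − (dF/dx)(x) G(x)`, which is the bracket evaluated at `x`.
-/

open MvPolynomial

/-- The Lie bracket `[F,G](x) = (dG/dx)(x) F(x) − (dF/dx)(x) G(x)` of polynomial vector
fields on `ℝⁿ`, i.e. `ad(F)(G)`. -/
noncomputable def bracket {n : ℕ} (F G : Fin n → MvPolynomial (Fin n) ℝ) :
    Fin n → MvPolynomial (Fin n) ℝ :=
  fun i => (∑ j, pderiv j (G i) * F j) - ∑ j, pderiv j (F i) * G j

/-- The Jacobian matrix of a polynomial vector field, evaluated at a point `x ∈ ℝⁿ`. -/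
noncomputable def jacEval {n : ℕ} (F : Fin n → MvPolynomial (Fin n) ℝ) (x : Fin n → ℝ) :
    Matrix (Fin n) (Fin n) ℝ :=
  fun i j => eval x (pderiv j (F i))

open Matrix

theorem MvPolynomial.IsHomogeneous.sum_eval_pderiv_mul {σ R : Type*} [CommSemiring R]
    [Fintype σ] {d : ℕ} {p : MvPolynomial σ R} (hp : p.IsHomogeneous d) (x : σ → R) :
    ∑ j, eval x (pderiv j p) * x j = d * eval x p := by
  have euler := congrArg (eval x) hp.sum_X_mul_pderiv
  simp only [map_sum, map_mul, eval_X, map_nsmul] at euler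
  simpa only [mul_comm, nsmul_eq_mul] using euler

theorem eval_bracket {n : ℕ} (F G : Fin n → MvPolynomial (Fin n) ℝ) (x : Fin n → ℝ) :
    (fun i => eval x (bracket F G i)) =
      jacEval G x *ᵥ (fun j => eval x (F j)) - jacEval F x *ᵥ (fun j => eval x (G j)) := by
  ext i
  simp [bracket, jacEval, mulVec, dotProduct]

theorem jacEval_mulVec_self_of_isHomogeneous {n d : ℕ} {F : Fin n → MvPolynomial (Fin n) ℝ}
    (hF : ∀ i, (F i).IsHomogeneous d) (x : Fin n → ℝ) :
    jacEval F x *ᵥ x = (d : ℝ) • fun i => eval x (F i) :=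
  funext fun i => (hF i).sum_eval_pderiv_mul x

/-- If `F ∈ L_t` and `G ∈ L_s` (components homogeneous of degrees `t+1`, `s+1`) and
`ℓ = (1+t)/(1+s)`, then for all `x`,
`ad(F)(G)(x) = (1/(1+t)) ((dG/dx)(x)(dF/dx)(x) − ℓ (dF/dx)(x)(dG/dx)(x)) · x`. -/
theorem ad_formula {n : ℕ} (t s : ℕ) (F G : Fin n → MvPolynomial (Fin n) ℝ)
    (hF : ∀ i, (F i).IsHomogeneous (t + 1)) (hG : ∀ i, (G i).IsHomogeneous (s + 1)) :
    ∀ x : Fin n → ℝ,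
      (fun i => eval x (bracket F G i)) =
        (1 / (1 + (t : ℝ))) •
          ((jacEval G x * jacEval F x
              - ((1 + (t : ℝ)) / (1 + (s : ℝ))) • (jacEval F x * jacEval G x)).mulVec x) := by
  intro x
  have ht : (1 + (t : ℝ)) ≠ 0 := by positivity
  have hs : (1 + (s : ℝ)) ≠ 0 := by positivity
  rw [eval_bracket, sub_mulVec, smul_mulVec, ← mulVec_mulVec, ← mulVec_mulVec,
    jacEval_mulVec_self_of_isHomogeneous hF, jacEval_mulVec_self_of_isHomogeneous hG,
    mulVec_smul, mulVec_smul, smul_sub, smul_smul, smul_smul, smul_smul]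
  match_scalars <;> field_simp <;> ring
end

section
/- Let F = F_0 + F_1 + ⋯ + F_N be a polynomial vector field on ℝⁿ with F_i ∈ L_i and F_0(x) = x (the identity vector field). Then every G_0 ∈ L_0 extends to a formal centralizer of F: there exists a sequence (G_i)_{i ≥ 1} with G_i ∈ L_i such that for every k ≥ 1, Σ_{i=0}^{k} [F_{k−i}, G_i] = 0 (where F_j := 0 for j > N); i.e. the formal power-series vector field G = Σ_{i ≥ 0} G_i satisfies [F, G] = 0. -/
open MvPolynomial

/-!
Bracketing with the Euler field `F₀(x) = x` acts on `L_k` as multiplication by `k` (Euler's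
identity for homogeneous polynomials). Hence the degree-`k` equation
`[F₀, G_k] + Σ_{i<k} [F_{k-i}, G_i] = 0` determines `G_k ∈ L_k` from the lower terms, and the
centralizer is built by this recursion.
-/

section Bracket

variable {n : ℕ}

lemma isHomogeneous_sum_pderiv_mul {P Q : Fin n → MvPolynomial (Fin n) ℝ} {a b : ℕ}
    (hP : ∀ i, (P i).IsHomogeneous (a + 1)) (hQ : ∀ i, (Q i).IsHomogeneous (b + 1))
    (i : Fin n) : (∑ j, pderiv j (Q i) * P j).IsHomogeneous (a + b + 1) :=
  IsHomogeneous.sum _ _ _ fun j _ => by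
    convert ((hQ i).pderiv (i := j)).mul (hP j) using 1
    omega

lemma isHomogeneous_bracket {F G : Fin n → MvPolynomial (Fin n) ℝ} {a b : ℕ}
    (hF : ∀ i, (F i).IsHomogeneous (a + 1)) (hG : ∀ i, (G i).IsHomogeneous (b + 1))
    (i : Fin n) : (bracket F G i).IsHomogeneous (a + b + 1) := by
  refine (isHomogeneous_sum_pderiv_mul hF hG i).sub ?_
  rw [add_comm a b]
  exact isHomogeneous_sum_pderiv_mul hG hF i

lemma bracket_X_left {G : Fin n → MvPolynomial (Fin n) ℝ} {k : ℕ}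
    (hG : ∀ i, (G i).IsHomogeneous (k + 1)) :
    bracket (fun i => X i) G = (k : ℝ) • G := by
  funext i
  have euler : ∑ j, pderiv j (G i) * X j = ((k : ℝ) + 1) • G i := by
    simp_rw [mul_comm _ (X _), (hG i).sum_X_mul_pderiv, ← Nat.cast_smul_eq_nsmul ℝ]
    push_cast
    rfl
  have hX : ∑ j, pderiv j (X i : MvPolynomial (Fin n) ℝ) * G j = G i := by
    simp [pderiv_X, Pi.single_apply]
  simp only [bracket, euler, hX, Pi.smul_apply, add_smul, one_smul, add_sub_cancel_right]

end Bracket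

section Centralizer

variable {n : ℕ} {F : ℕ → Fin n → MvPolynomial (Fin n) ℝ} {G0 : Fin n → MvPolynomial (Fin n) ℝ}

noncomputable def centralizerSeq (F : ℕ → Fin n → MvPolynomial (Fin n) ℝ)
    (G0 : Fin n → MvPolynomial (Fin n) ℝ) : ℕ → Fin n → MvPolynomial (Fin n) ℝ
  | 0 => G0
  | k + 1 => -((k : ℝ) + 1)⁻¹ •
      ∑ j : Fin (k + 1), bracket (F (k + 1 - j)) (centralizerSeq F G0 j)

@[simp]
lemma centralizerSeq_zero : centralizerSeq F G0 0 = G0 := by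
  rw [centralizerSeq]

lemma centralizerSeq_succ (k : ℕ) :
    centralizerSeq F G0 (k + 1) = -((k : ℝ) + 1)⁻¹ •
      ∑ j ∈ Finset.range (k + 1), bracket (F (k + 1 - j)) (centralizerSeq F G0 j) := by
  rw [centralizerSeq, Fin.sum_univ_eq_sum_range
    (fun j => bracket (F (k + 1 - j)) (centralizerSeq F G0 j))]

lemma isHomogeneous_centralizerSeq (hFhom : ∀ k i, (F k i).IsHomogeneous (k + 1))
    (hG0 : ∀ i, (G0 i).IsHomogeneous 1) (k : ℕ) (i : Fin n) :
    (centralizerSeq F G0 k i).IsHomogeneous (k + 1) := by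
  induction k using Nat.strong_induction_on generalizing i with
  | _ k ih =>
    cases k with
    | zero => simpa using hG0 i
    | succ k =>
      rw [centralizerSeq_succ, Pi.smul_apply, Finset.sum_apply, smul_eq_C_mul]
      refine IsHomogeneous.C_mul (IsHomogeneous.sum _ _ _ fun j hj => ?_) _
      have hj : j < k + 1 := Finset.mem_range.mp hj
      convert isHomogeneous_bracket (hFhom _) (ih j hj) i using 1
      omega

lemma sum_bracket_centralizerSeq_eq_zero (hF0 : F 0 = fun i => X i)
    (hFhom : ∀ k i, (F k i).IsHomogeneous (k + 1)) (hG0 : ∀ i, (G0 i).IsHomogeneous 1)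
    (k : ℕ) :
    ∑ i ∈ Finset.range (k + 2), bracket (F (k + 1 - i)) (centralizerSeq F G0 i) = 0 := by
  set S := ∑ j ∈ Finset.range (k + 1), bracket (F (k + 1 - j)) (centralizerSeq F G0 j)
  have hlast : bracket (F 0) (centralizerSeq F G0 (k + 1)) = -S := by
    have hk : ((k : ℝ) + 1) ≠ 0 := by positivity
    rw [hF0, bracket_X_left (isHomogeneous_centralizerSeq hFhom hG0 (k + 1)),
      centralizerSeq_succ, smul_smul]
    push_cast
    rw [mul_neg, mul_inv_cancel₀ hk, neg_one_smul]
  rw [Finset.sum_range_succ, Nat.sub_self, hlast, add_neg_cancel]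

end Centralizer

theorem formal_centralizer_general {n : ℕ} (F : ℕ → Fin n → MvPolynomial (Fin n) ℝ)
    (hF0 : F 0 = fun i => X i)
    (hFhom : ∀ k i, (F k i).IsHomogeneous (k + 1))
    (G0 : Fin n → MvPolynomial (Fin n) ℝ) (hG0 : ∀ i, (G0 i).IsHomogeneous 1) :
    ∃ G : ℕ → Fin n → MvPolynomial (Fin n) ℝ,
      G 0 = G0 ∧ (∀ k i, (G k i).IsHomogeneous (k + 1)) ∧
      ∀ k, 1 ≤ k → ∑ i ∈ Finset.range (k + 1), bracket (F (k - i)) (G i) = 0 := by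
  refine ⟨centralizerSeq F G0, centralizerSeq_zero,
    isHomogeneous_centralizerSeq hFhom hG0, fun k hk => ?_⟩
  obtain ⟨k, rfl⟩ := Nat.exists_eq_add_of_le' hk
  exact sum_bracket_centralizerSeq_eq_zero hF0 hFhom hG0 k

/-- Let `F = F_0 + F_1 + ⋯ + F_N` with `F_i ∈ L_i`, `F_k = 0` for `k > N` and
`F_0(x) = x` the identity vector field.  Then every `G_0 ∈ L_0` extends to a formal
centralizer of `F`: there exist `G_i ∈ L_i` (`i ≥ 1`) such that for every `k ≥ 1`,
`Σ_{i=0}^{k} [F_{k−i}, G_i] = 0`, i.e. `[F, Σᵢ Gᵢ] = 0` as a formal power-series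
vector field. -/
theorem formal_centralizer {n N : ℕ} (F : ℕ → Fin n → MvPolynomial (Fin n) ℝ)
    (hF0 : F 0 = fun i => X i)
    (hFhom : ∀ k i, (F k i).IsHomogeneous (k + 1))
    (hFtop : ∀ k, N < k → F k = 0)
    (G0 : Fin n → MvPolynomial (Fin n) ℝ) (hG0 : ∀ i, (G0 i).IsHomogeneous 1) :
    ∃ G : ℕ → Fin n → MvPolynomial (Fin n) ℝ,
      G 0 = G0 ∧ (∀ k i, (G k i).IsHomogeneous (k + 1)) ∧
      ∀ k, 1 ≤ k → ∑ i ∈ Finset.range (k + 1), bracket (F (k - i)) (G i) = 0 :=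
  formal_centralizer_general F hF0 hFhom G0 hG0
end

section
/- Let g ∈ ℝ[x_1,…,x_n] be a homogeneous polynomial of degree s > 0 and let p ≥ 0 be an integer. If Σ_{i=1}^{n} (∂g/∂x_i) · x_i^{p+1} = 0, then g = 0. -/
/-!
For `p = 0` the operator `∑ xᵢ^{p+1} ∂ᵢ` is Euler's and multiplies `g` by `s`. For `p > 0`, pick
a variable `xᵢ` of largest degree `M` in `g` and a monomial `x^d` of `g` with `dᵢ = M`. In the
image of `g`, the coefficient of `x^d · xᵢ^p` is `M` times that of `x^d` in `g`: a contribution through `∂ⱼ` with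
`j ≠ i` would come from a monomial of `g` with `xᵢ`-degree `M + p > M`.
-/

open MvPolynomial

namespace MvPolynomial

variable {R σ : Type*} [CommSemiring R]

lemma coeff_add_single_mul_X_pow (f : MvPolynomial σ R) (k : σ →₀ ℕ) (j : σ) (q : ℕ) :
    coeff (k + Finsupp.single j q) (f * X j ^ q) = coeff k f := by
  rw [X_pow_eq_monomial, coeff_mul_monomial, mul_one]

lemma coeff_add_single_pderiv_mul_X_pow_succ (g : MvPolynomial σ R) (d : σ →₀ ℕ) (i : σ)
    (p : ℕ) : coeff (d + Finsupp.single i p) (pderiv i g * X i ^ (p + 1)) = coeff d g * d i := by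
  classical
  rcases Nat.eq_zero_or_pos (d i) with hdi | hdi
  · rw [hdi, Nat.cast_zero, mul_zero, X_pow_eq_monomial, coeff_mul_monomial', if_neg]
    intro hle
    simpa [hdi] using Finsupp.le_def.1 hle i
  · obtain ⟨k, rfl⟩ : ∃ k, d = k + Finsupp.single i 1 :=
      ⟨d - Finsupp.single i 1, (tsub_add_cancel_of_le (Finsupp.single_le_iff.2 hdi)).symm⟩
    rw [add_assoc, ← Finsupp.single_add, add_comm 1, coeff_add_single_mul_X_pow, coeff_pderiv]
    simp

lemma coeff_pderiv_mul_X_pow_eq_zero {g : MvPolynomial σ R} {m : σ →₀ ℕ} {i j : σ} (hji : j ≠ i)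
    (q : ℕ) (hg : ∀ d ∈ g.support, d i ≠ m i) : coeff m (pderiv j g * X j ^ q) = 0 := by
  classical
  rw [X_pow_eq_monomial, coeff_mul_monomial', coeff_pderiv]
  split_ifs
  · rw [notMem_support_iff.mp fun hmem => hg _ hmem ?_, zero_mul, mul_one]
    simp [hji]
  · rfl

lemma exists_mem_support_forall_le_of_totalDegree_ne_zero [Fintype σ] {g : MvPolynomial σ R}
    (hg : g.totalDegree ≠ 0) :
    ∃ d ∈ g.support, ∃ i, 0 < d i ∧ ∀ d' ∈ g.support, ∀ j, d' j ≤ d i := by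
  obtain ⟨d₀, hd₀, j₀, hj₀⟩ : ∃ d ∈ g.support, ∃ j, d j ≠ 0 := by
    simpa [totalDegree_eq_zero_iff] using hg
  obtain ⟨i, -, hi⟩ := Finset.exists_max_image Finset.univ (degreeOf · g) ⟨j₀, Finset.mem_univ _⟩
  obtain ⟨d, hd, hdi⟩ := Finset.exists_mem_eq_sup g.support ⟨d₀, hd₀⟩ fun m => m i
  rw [← degreeOf_eq_sup] at hdi
  refine ⟨d, hd, i, ?_, fun d' hd' j => ?_⟩
  · have := monomial_le_degreeOf j₀ hd₀
    have := hi j₀ (Finset.mem_univ _)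
    omega
  · have := monomial_le_degreeOf j hd'
    have := hi j (Finset.mem_univ _)
    omega

theorem totalDegree_eq_zero_of_sum_pderiv_mul_X_pow_eq_zero [Fintype σ] [NoZeroDivisors R]
    [CharZero R] {g : MvPolynomial σ R} {p : ℕ} (hp : 0 < p)
    (h : ∑ i, pderiv i g * X i ^ (p + 1) = 0) : g.totalDegree = 0 := by
  by_contra hg
  obtain ⟨d, hd, i, hdi, hmax⟩ := exists_mem_support_forall_le_of_totalDegree_ne_zero hg
  have hcoeff : coeff (d + Finsupp.single i p) (∑ j, pderiv j g * X j ^ (p + 1)) =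
      coeff d g * d i := by
    rw [coeff_sum, Finset.sum_eq_single i, coeff_add_single_pderiv_mul_X_pow_succ]
    · intro j _ hji
      refine coeff_pderiv_mul_X_pow_eq_zero hji _ fun d' hd' => ?_
      have := hmax d' hd' i
      simp only [Finsupp.add_apply, Finsupp.single_eq_same]
      omega
    · simp
  rw [h, coeff_zero, eq_comm] at hcoeff
  exact mul_ne_zero (mem_support_iff.mp hd) (Nat.cast_ne_zero.mpr hdi.ne') hcoeff

end MvPolynomial

/-- If `g ∈ ℝ[x_1,…,x_n]` is homogeneous of degree `s > 0` and
`Σ_{i=1}^{n} (∂g/∂x_i) · x_i^{p+1} = 0`, then `g = 0`. -/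
theorem homogeneous_vanish {n : ℕ} (g : MvPolynomial (Fin n) ℝ) (s p : ℕ) (hs : 0 < s)
    (hg : g.IsHomogeneous s)
    (h : ∑ i, pderiv i g * X i ^ (p + 1) = 0) :
    g = 0 := by
  by_contra hne
  have hdeg : g.totalDegree = s := hg.totalDegree hne
  rcases Nat.eq_zero_or_pos p with rfl | hp
  · have euler := hg.sum_X_mul_pderiv
    simp_rw [zero_add, pow_one, mul_comm (pderiv _ g)] at h
    rw [h, eq_comm, smul_eq_zero] at euler
    exact euler.elim (by omega) hne
  · have := totalDegree_eq_zero_of_sum_pderiv_mul_X_pow_eq_zero hp h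
    omega
end

section
/- Let p ≥ 1 and let F_p be the vector field on ℝⁿ given by F_p(x) = (1/(p+1)) · (x_1^{p+1}, x_2^{p+1}, …, x_n^{p+1}). Then for every integer j ≥ 0 with j ≠ p, the map ad(F_p)|_{L_j} : L_j → L_{p+j} is injective; i.e. if G ∈ L_j and [F_p, G] = 0 then G = 0. -/
/-!
Componentwise, `[F_p, G] = 0` says `D (G i) = (p + 1) X i ^ p * G i`, where
`D = ∑ l, X l ^ (p + 1) ∂_l`. Let `m` be an exponent of `G i` whose `k`-th entry is maximal and
compare coefficients at `m + p e_k`: by maximality only the `l = k` term of `D` contributes, giving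
`m k` times the coefficient of `m`, while the right-hand side contributes that coefficient for
`k = i` and nothing for `k ≠ i`. Hence `m k = p + 1` if `k = i` and `m k = 0` otherwise, so
`X i ^ (p + 1)` occurs in `G i ≠ 0`, and homogeneity forces `j + 1 = p + 1`.
-/

open MvPolynomial

namespace MvPolynomial

variable {σ R : Type*} [CommSemiring R]

theorem coeff_X_mul_pderiv (l : σ) (H : MvPolynomial σ R) (m : σ →₀ ℕ) :
    coeff m (X l * pderiv l H) = m l * coeff m H := by
  classical
  rw [coeff_X_mul']
  split_ifs with h
  · have hle : Finsupp.single l 1 ≤ m :=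
      Finsupp.single_le_iff.mpr (Nat.one_le_iff_ne_zero.mpr (Finsupp.mem_support_iff.mp h))
    rw [coeff_pderiv, tsub_add_cancel_of_le hle, Finsupp.tsub_apply, Finsupp.single_eq_same,
      mul_comm, ← Nat.cast_add_one, Nat.sub_add_cancel (Finsupp.single_le_iff.mp hle)]
  · simp [Finsupp.notMem_support_iff.mp h]

theorem support_X_mul_pderiv_subset (l : σ) (H : MvPolynomial σ R) :
    (X l * pderiv l H).support ⊆ H.support := fun m hm ↦ by
  rw [mem_support_iff, coeff_X_mul_pderiv] at *
  exact right_ne_zero_of_mul hm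

theorem coeff_add_single_X_pow_mul (k : σ) (p : ℕ) (Q : MvPolynomial σ R) (m : σ →₀ ℕ) :
    coeff (m + Finsupp.single k p) (X k ^ p * Q) = coeff m Q := by
  rw [X_pow_eq_monomial, add_comm, coeff_monomial_mul, one_mul]

theorem coeff_add_single_X_pow_mul_of_ne {k l : σ} (hlk : l ≠ k) {p : ℕ} (hp : 0 < p)
    {Q : MvPolynomial σ R} {m : σ →₀ ℕ} (hmax : ∀ m' ∈ Q.support, m' k ≤ m k) :
    coeff (m + Finsupp.single k p) (X l ^ p * Q) = 0 := by
  classical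
  rw [X_pow_eq_monomial, coeff_monomial_mul', one_mul]
  split_ifs
  · refine notMem_support_iff.mp fun hm' ↦ ?_
    have := hmax _ hm'
    simp [Ne.symm hlk] at this
    omega
  · rfl

noncomputable def powDerivation [Fintype σ] (p : ℕ) (H : MvPolynomial σ R) : MvPolynomial σ R :=
  ∑ l, X l ^ (p + 1) * pderiv l H

theorem coeff_add_single_powDerivation [Fintype σ] {k : σ} {p : ℕ} (hp : 0 < p)
    {H : MvPolynomial σ R} {m : σ →₀ ℕ} (hmax : ∀ m' ∈ H.support, m' k ≤ m k) :
    coeff (m + Finsupp.single k p) (powDerivation p H) = m k * coeff m H := by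
  simp_rw [powDerivation, pow_succ, mul_assoc, coeff_sum]
  rw [Finset.sum_eq_single k, coeff_add_single_X_pow_mul, coeff_X_mul_pderiv]
  · exact fun l _ hlk ↦ coeff_add_single_X_pow_mul_of_ne hlk hp
      fun m' hm' ↦ hmax m' (support_X_mul_pderiv_subset l H hm')
  · simp

variable {K : Type*} [Field K] [CharZero K] [Fintype σ] {p : ℕ} {H : MvPolynomial σ K} {i : σ}

theorem apply_eq_of_powDerivation_eq [DecidableEq σ] (hp : 0 < p)
    (hH : C ((p + 1 : K)⁻¹) * powDerivation p H = X i ^ p * H)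
    {k : σ} {m : σ →₀ ℕ} (hm : m ∈ H.support) (hmax : ∀ m' ∈ H.support, m' k ≤ m k) :
    m k = if k = i then p + 1 else 0 := by
  have hcoeff := congrArg (coeff (m + Finsupp.single k p)) hH
  rw [coeff_C_mul, coeff_add_single_powDerivation hp hmax] at hcoeff
  have hcm : coeff m H ≠ 0 := mem_support_iff.mp hm
  have hp1 : (p + 1 : K) ≠ 0 := Nat.cast_add_one_ne_zero p
  split_ifs with hki
  · subst hki
    rw [coeff_add_single_X_pow_mul] at hcoeff
    have : (m k : K) = p + 1 := by field_simp at hcoeff; linear_combination hcoeff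
    exact_mod_cast this
  · rw [coeff_add_single_X_pow_mul_of_ne (Ne.symm hki) hp hmax] at hcoeff
    simpa [hp1, hcm] using hcoeff

theorem single_mem_support_of_powDerivation_eq (hp : 0 < p) (hH0 : H ≠ 0)
    (hH : C ((p + 1 : K)⁻¹) * powDerivation p H = X i ^ p * H) :
    Finsupp.single i (p + 1) ∈ H.support := by
  classical
  have hne : H.support.Nonempty := support_nonempty.mpr hH0
  obtain ⟨m, hm, hmax⟩ := H.support.exists_max_image (· i) hne
  convert hm
  ext k
  rw [Finsupp.single_apply]
  split_ifs with hik
  · subst hik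
    simpa using (apply_eq_of_powDerivation_eq hp hH hm hmax).symm
  · obtain ⟨m', hm', hmax'⟩ := H.support.exists_max_image (· k) hne
    have hm'k := apply_eq_of_powDerivation_eq hp hH hm' hmax'
    rw [if_neg (Ne.symm hik)] at hm'k
    have := hmax' m hm
    omega

end MvPolynomial

theorem bracket_Fp_apply {n : ℕ} (p : ℕ) (G : Fin n → MvPolynomial (Fin n) ℝ) (i : Fin n) :
    bracket (fun i => C (((p : ℝ) + 1)⁻¹) * X i ^ (p + 1)) G i =
      C (((p : ℝ) + 1)⁻¹) * powDerivation p (G i) - X i ^ p * G i := by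
  have hp1 : ((p : ℝ) + 1) ≠ 0 := Nat.cast_add_one_ne_zero p
  have hsum : ∑ l, pderiv l (C (((p : ℝ) + 1)⁻¹) * X i ^ (p + 1)) * G l = X i ^ p * G i := by
    rw [Finset.sum_eq_single i]
    · rw [pderiv_C_mul, pderiv_pow, pderiv_X_self, Nat.add_sub_cancel, mul_one,
        ← map_natCast (C : ℝ →+* MvPolynomial (Fin n) ℝ), ← mul_assoc, ← C_mul,
        Nat.cast_add_one, inv_mul_cancel₀ hp1, C_1, one_mul]
    · intro l _ hli
      rw [pderiv_C_mul, pderiv_pow, pderiv_X_of_ne (Ne.symm hli), mul_zero, mul_zero, zero_mul]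
    · simp
  rw [bracket, hsum, powDerivation, Finset.mul_sum]
  congr 1
  exact Finset.sum_congr rfl fun l _ ↦ by ring

/-- For `p ≥ 1` and `F_p(x) = (1/(p+1)) (x_1^{p+1}, …, x_n^{p+1})`, the map
`ad(F_p)|_{L_j} : L_j → L_{p+j}` is injective whenever `j ≠ p`: if `G ∈ L_j` and
`[F_p, G] = 0` then `G = 0`. -/
theorem ad_Fp_injective {n : ℕ} (p : ℕ) (hp : 1 ≤ p) (j : ℕ) (hj : j ≠ p)
    (G : Fin n → MvPolynomial (Fin n) ℝ)
    (hG : ∀ i, (G i).IsHomogeneous (j + 1))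
    (hker : bracket (fun i => C (((p : ℝ) + 1)⁻¹) * X i ^ (p + 1)) G = 0) :
    G = 0 := by
  funext i
  by_contra hGi
  have hsingle := single_mem_support_of_powDerivation_eq hp hGi
    (sub_eq_zero.mp ((bracket_Fp_apply p G i).symm.trans (congrFun hker i)))
  have hdeg := hG i (mem_support_iff.mp hsingle)
  rw [Finsupp.weight_single, Pi.one_apply, smul_eq_mul, mul_one] at hdeg
  omega
end
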